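/- arXiv:2003.11010 — 6 statements merged into one kernel-verified Lean document; each statement's English description precedes it below -/
import Mathlib

section
/- In the category of directed multigraphs, a pair of injective graph homomorphisms α : A ↪ P and β : B ↪ P is jointly surjective (on both vertices and edges) and forms a pushout of the span (A ↩ D ↪ B), where D is the pullback of α and β, if and only if P is (isomorphic to) the pushout of that span. -/
open CategoryTheory

/-- A directed multigraph: vertex set, edge set, source and target maps. -/
structure MultiGraph where
  V : Type
  E : Type
  s : E → V
  t : E → V

/-- A homomorphism of directed multigraphs. -/
@[ext]
structure MultiGraphHom (G H : MultiGraph) where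
  onV : G.V → H.V
  onE : G.E → H.E
  src : ∀ e, H.s (onE e) = onV (G.s e)
  tgt : ∀ e, H.t (onE e) = onV (G.t e)

/-- The category of directed multigraphs. -/
instance : Category MultiGraph where
  Hom := MultiGraphHom
  id G := ⟨id, id, fun _ => rfl, fun _ => rfl⟩
  comp f g := ⟨g.onV ∘ f.onV, g.onE ∘ f.onE,
    fun e => by simp [g.src, f.src], fun e => by simp [g.tgt, f.tgt]⟩
  id_comp f := rfl
  comp_id f := rfl
  assoc f g h := rfl

@[simp] lemma MultiGraph.comp_onV {G H K : MultiGraph} (f : G ⟶ H) (g : H ⟶ K) :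
    (f ≫ g).onV = g.onV ∘ f.onV := rfl

@[simp] lemma MultiGraph.comp_onE {G H K : MultiGraph} (f : G ⟶ H) (g : H ⟶ K) :
    (f ≫ g).onE = g.onE ∘ f.onE := rfl

/-!
The one-vertex graph and the one-edge graph represent the vertex and edge functors, so the
pullback `D` is computed pointwise, and a cocone under the span amounts to maps on vertices and on
edges that agree wherever `α` and `β` do. For injective, jointly surjective `α` and `β` such maps
glue uniquely along `P`.

Conversely, both functors have right adjoints: the graph on `X` with one edge for every ordered
pair of vertices, and the one-vertex graph with edge set `X`. Hence the legs of a pushout are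
jointly epimorphic on vertices and on edges, and testing against predicates, i.e. `X = Prop`,
shows that they are jointly surjective.
-/

open CategoryTheory Limits Function

theorem Function.exists_glue_of_injective {A B P X : Type*} {α : A → P} {β : B → P}
    (hα : Injective α) (hβ : Injective β) (hs : ∀ p, (∃ a, α a = p) ∨ ∃ b, β b = p)
    {f : A → X} {g : B → X} (hfg : ∀ a b, α a = β b → f a = g b) :
    ∃ h : P → X, (∀ a, h (α a) = f a) ∧ ∀ b, h (β b) = g b := by
  have value : ∀ p, ∃ x, (∀ a, α a = p → f a = x) ∧ ∀ b, β b = p → g b = x := by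
    intro p
    rcases hs p with ⟨a, rfl⟩ | ⟨b, rfl⟩
    · exact ⟨f a, fun a' ha' => congrArg f (hα ha'), fun b hb => (hfg a b hb.symm).symm⟩
    · exact ⟨g b, fun a ha => hfg a b ha, fun b' hb' => congrArg g (hβ hb')⟩
  choose h hα' hβ' using value
  exact ⟨h, fun a => (hα' _ a rfl).symm, fun b => (hβ' _ b rfl).symm⟩

theorem Function.jointlySurjective_of_comp_ext {A B P : Type*} {α : A → P} {β : B → P}
    (hext : ∀ u w : P → Prop, u ∘ α = w ∘ α → u ∘ β = w ∘ β → u = w) :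
    ∀ p, (∃ a, α a = p) ∨ ∃ b, β b = p := by
  have h := hext (fun p => (∃ a, α a = p) ∨ ∃ b, β b = p) (fun _ => True)
    (funext fun a => eq_true (Or.inl ⟨a, rfl⟩)) (funext fun b => eq_true (Or.inr ⟨b, rfl⟩))
  exact fun p => of_eq_true (congrFun h p)

namespace MultiGraph

variable {A B D P G H : MultiGraph}

def JointlySurjective (α : A ⟶ P) (β : B ⟶ P) : Prop :=
  (∀ v : P.V, (∃ a, α.onV a = v) ∨ (∃ b, β.onV b = v)) ∧
  (∀ e : P.E, (∃ a, α.onE a = e) ∨ (∃ b, β.onE b = e))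

def vertex : MultiGraph := ⟨PUnit, PEmpty, PEmpty.elim, PEmpty.elim⟩

def arrow : MultiGraph := ⟨Bool, PUnit, fun _ => false, fun _ => true⟩

def ofVertex (v : G.V) : vertex ⟶ G := ⟨fun _ => v, PEmpty.elim, (·.elim), (·.elim)⟩

def ofEdge (e : G.E) : arrow ⟶ G :=
  ⟨fun i => cond i (G.t e) (G.s e), fun _ => e, fun _ => rfl, fun _ => rfl⟩

lemma ofVertex_comp (v : G.V) (φ : G ⟶ H) : ofVertex v ≫ φ = ofVertex (φ.onV v) :=
  MultiGraphHom.ext rfl (funext (·.elim))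

lemma ofEdge_comp (e : G.E) (φ : G ⟶ H) : ofEdge e ≫ φ = ofEdge (φ.onE e) :=
  MultiGraphHom.ext (funext fun i => by cases i; exacts [(φ.src e).symm, (φ.tgt e).symm]) rfl

def codiscrete (X : Type) : MultiGraph := ⟨X, X × X, Prod.fst, Prod.snd⟩

def toCodiscrete {X : Type} (u : G.V → X) : G ⟶ codiscrete X :=
  ⟨u, fun e => (u (G.s e), u (G.t e)), fun _ => rfl, fun _ => rfl⟩

lemma comp_toCodiscrete {X : Type} (φ : G ⟶ H) (u : H.V → X) :
    φ ≫ toCodiscrete u = toCodiscrete (u ∘ φ.onV) :=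
  MultiGraphHom.ext rfl (funext fun e => Prod.ext (congrArg u (φ.src e)) (congrArg u (φ.tgt e)))

def bouquet (X : Type) : MultiGraph := ⟨PUnit, X, fun _ => ⟨⟩, fun _ => ⟨⟩⟩

def toBouquet {X : Type} (u : G.E → X) : G ⟶ bouquet X :=
  ⟨fun _ => ⟨⟩, u, fun _ => rfl, fun _ => rfl⟩

lemma comp_toBouquet {X : Type} (φ : G ⟶ H) (u : H.E → X) :
    φ ≫ toBouquet u = toBouquet (u ∘ φ.onE) :=
  rfl

section Pullback

variable {α : A ⟶ P} {β : B ⟶ P} {pA : D ⟶ A} {pB : D ⟶ B}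

lemma exists_onV_of_isPullback (h : IsPullback pA pB α β) {a : A.V} {b : B.V}
    (hab : α.onV a = β.onV b) : ∃ d, pA.onV d = a ∧ pB.onV d = b := by
  have w : ofVertex a ≫ α = ofVertex b ≫ β := by rw [ofVertex_comp, ofVertex_comp, hab]
  exact ⟨(h.lift _ _ w).onV ⟨⟩, congr($(h.lift_fst _ _ w).onV ⟨⟩),
    congr($(h.lift_snd _ _ w).onV ⟨⟩)⟩

lemma exists_onE_of_isPullback (h : IsPullback pA pB α β) {a : A.E} {b : B.E}
    (hab : α.onE a = β.onE b) : ∃ d, pA.onE d = a ∧ pB.onE d = b := by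
  have w : ofEdge a ≫ α = ofEdge b ≫ β := by rw [ofEdge_comp, ofEdge_comp, hab]
  exact ⟨(h.lift _ _ w).onE ⟨⟩, congr($(h.lift_fst _ _ w).onE ⟨⟩),
    congr($(h.lift_snd _ _ w).onE ⟨⟩)⟩

lemma onV_eq_of_isPullback {X : MultiGraph} (h : IsPullback pA pB α β) {f : A ⟶ X}
    {g : B ⟶ X} (w : pA ≫ f = pB ≫ g) (a : A.V) (b : B.V) (hab : α.onV a = β.onV b) :
    f.onV a = g.onV b := by
  obtain ⟨d, rfl, rfl⟩ := exists_onV_of_isPullback h hab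
  exact congr($(w).onV d)

lemma onE_eq_of_isPullback {X : MultiGraph} (h : IsPullback pA pB α β) {f : A ⟶ X}
    {g : B ⟶ X} (w : pA ≫ f = pB ≫ g) (a : A.E) (b : B.E) (hab : α.onE a = β.onE b) :
    f.onE a = g.onE b := by
  obtain ⟨d, rfl, rfl⟩ := exists_onE_of_isPullback h hab
  exact congr($(w).onE d)

end Pullback

namespace JointlySurjective

variable {α : A ⟶ P} {β : B ⟶ P} {X : MultiGraph}

lemma hom_ext (hs : JointlySurjective α β) {m m' : P ⟶ X} (hα : α ≫ m = α ≫ m')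
    (hβ : β ≫ m = β ≫ m') : m = m' := by
  refine MultiGraphHom.ext (funext fun v => ?_) (funext fun e => ?_)
  · rcases hs.1 v with ⟨a, rfl⟩ | ⟨b, rfl⟩
    exacts [congr($(hα).onV a), congr($(hβ).onV b)]
  · rcases hs.2 e with ⟨a, rfl⟩ | ⟨b, rfl⟩
    exacts [congr($(hα).onE a), congr($(hβ).onE b)]

lemma exists_desc (hs : JointlySurjective α β)
    (hαV : Injective α.onV) (hαE : Injective α.onE)
    (hβV : Injective β.onV) (hβE : Injective β.onE) {f : A ⟶ X} {g : B ⟶ X}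
    (hV : ∀ a b, α.onV a = β.onV b → f.onV a = g.onV b)
    (hE : ∀ a b, α.onE a = β.onE b → f.onE a = g.onE b) :
    ∃ m : P ⟶ X, α ≫ m = f ∧ β ≫ m = g := by
  obtain ⟨mV, hmαV, hmβV⟩ := exists_glue_of_injective hαV hβV hs.1 hV
  obtain ⟨mE, hmαE, hmβE⟩ := exists_glue_of_injective hαE hβE hs.2 hE
  have incidence : ∀ e, X.s (mE e) = mV (P.s e) ∧ X.t (mE e) = mV (P.t e) := by
    intro e
    rcases hs.2 e with ⟨a, rfl⟩ | ⟨b, rfl⟩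
    · simp only [hmαE, hmαV, f.src, f.tgt, α.src, α.tgt, and_self]
    · simp only [hmβE, hmβV, g.src, g.tgt, β.src, β.tgt, and_self]
  exact ⟨⟨mV, mE, fun e => (incidence e).1, fun e => (incidence e).2⟩,
    MultiGraphHom.ext (funext hmαV) (funext hmαE), MultiGraphHom.ext (funext hmβV) (funext hmβE)⟩

end JointlySurjective

theorem isPushout_of_jointlySurjective {α : A ⟶ P} {β : B ⟶ P} {pA : D ⟶ A} {pB : D ⟶ B}
    (hαV : Injective α.onV) (hαE : Injective α.onE)
    (hβV : Injective β.onV) (hβE : Injective β.onE)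
    (h : IsPullback pA pB α β) (hs : JointlySurjective α β) : IsPushout pA pB α β := by
  have desc (s : PushoutCocone pA pB) : ∃ m : P ⟶ s.pt, α ≫ m = s.inl ∧ β ≫ m = s.inr :=
    hs.exists_desc hαV hαE hβV hβE (onV_eq_of_isPullback h s.condition)
      (onE_eq_of_isPullback h s.condition)
  choose m hmα hmβ using desc
  exact IsPushout.of_isColimit (PushoutCocone.IsColimit.mk h.w m hmα hmβ
    fun s _ hα hβ => hs.hom_ext (hα.trans (hmα s).symm) (hβ.trans (hmβ s).symm))

section Pushout

variable {f : D ⟶ A} {g : D ⟶ B} {α : A ⟶ P} {β : B ⟶ P}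

lemma onV_ext_of_isPushout (h : IsPushout f g α β) {X : Type} {u w : P.V → X}
    (hα : u ∘ α.onV = w ∘ α.onV) (hβ : u ∘ β.onV = w ∘ β.onV) : u = w :=
  congr($(h.hom_ext (k := toCodiscrete u) (l := toCodiscrete w)
    (by rw [comp_toCodiscrete, comp_toCodiscrete, hα])
    (by rw [comp_toCodiscrete, comp_toCodiscrete, hβ])).onV)

lemma onE_ext_of_isPushout (h : IsPushout f g α β) {X : Type} {u w : P.E → X}
    (hα : u ∘ α.onE = w ∘ α.onE) (hβ : u ∘ β.onE = w ∘ β.onE) : u = w :=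
  congr($(h.hom_ext (k := toBouquet u) (l := toBouquet w)
    (by rw [comp_toBouquet, comp_toBouquet, hα])
    (by rw [comp_toBouquet, comp_toBouquet, hβ])).onE)

lemma jointlySurjective_of_isPushout (h : IsPushout f g α β) : JointlySurjective α β :=
  ⟨jointlySurjective_of_comp_ext fun _ _ => onV_ext_of_isPushout h,
    jointlySurjective_of_comp_ext fun _ _ => onE_ext_of_isPushout h⟩

end Pushout

end MultiGraph

/-- In the category of directed multigraphs, a pair of injective graph
homomorphisms `α : A ↪ P` and `β : B ↪ P` is jointly surjective (on both
vertices and edges) if and only if `P` is the pushout of the span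
`(A ↩ D ↪ B)`, where `D` is the pullback of `α` and `β`. -/
theorem stmt_6 {A B P : MultiGraph} (α : A ⟶ P) (β : B ⟶ P)
    (hαV : Function.Injective α.onV) (hαE : Function.Injective α.onE)
    (hβV : Function.Injective β.onV) (hβE : Function.Injective β.onE)
    {D : MultiGraph} (pA : D ⟶ A) (pB : D ⟶ B)
    (hpb : IsPullback pA pB α β) :
    ((∀ v : P.V, (∃ a, α.onV a = v) ∨ (∃ b, β.onV b = v)) ∧
     (∀ e : P.E, (∃ a, α.onE a = e) ∨ (∃ b, β.onE b = e)))
      ↔ IsPushout pA pB α β :=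
  ⟨MultiGraph.isPushout_of_jointlySurjective hαV hαE hβV hβE hpb,
    MultiGraph.jointlySurjective_of_isPushout⟩
end

section
/- Let C be an adhesive category, let P be the pushout object of a span of monomorphisms (I ↩ M ↪ O), and let N be any object. If there exists a monomorphism N ↪ P, then there exist objects C₁, C₂, D with monomorphisms forming a span (C₂ ↩ D ↪ C₁) whose pushout is N, together with monomorphisms C₂ ↪ I, D ↪ M, C₁ ↪ O such that the squares (D, C₂, I, M) and (D, C₁, O, M) are pullbacks. -/
open CategoryTheory
open CategoryTheory.Limits

/-! Pull the van Kampen square `(M, I, O, P)` back along `n`: the top face of the resulting cube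
is a pushout, and every new map is a pullback of a monomorphism, hence monic. -/

/-- Forward direction of the "forbidden relation" decomposition theorem.
In an adhesive category, let `P` be the pushout of a span of monomorphisms
`(I ↩ M ↪ O)` and let `N ↪ P` be a monomorphism.  Then `N` decomposes as the
pushout of a span of monomorphisms `(C₂ ↩ D ↪ C₁)` which embeds compatibly
into the given span, such that the squares `(D, C₂, I, M)` and `(D, C₁, O, M)`
are pullbacks. -/
theorem stmt_7 {𝒞 : Type*} [Category 𝒞] [Adhesive 𝒞] {I M O P N : 𝒞}
    (mI : M ⟶ I) (mO : M ⟶ O) [Mono mI] [Mono mO]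
    (iI : I ⟶ P) (iO : O ⟶ P) (H : IsPushout mI mO iI iO)
    (n : N ⟶ P) [Mono n] :
    ∃ (C₁ C₂ D : 𝒞) (d₂ : D ⟶ C₂) (d₁ : D ⟶ C₁)
      (c₂ : C₂ ⟶ N) (c₁ : C₁ ⟶ N)
      (e₂ : C₂ ⟶ I) (eD : D ⟶ M) (e₁ : C₁ ⟶ O),
        Mono d₂ ∧ Mono d₁ ∧ Mono e₂ ∧ Mono eD ∧ Mono e₁ ∧
        IsPushout d₂ d₁ c₂ c₁ ∧
        c₂ ≫ n = e₂ ≫ iI ∧ c₁ ≫ n = e₁ ≫ iO ∧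
        IsPullback d₂ eD e₂ mI ∧
        IsPullback d₁ eD e₁ mO := by
  have hI : IsPullback (pullback.fst n iI) (pullback.snd n iI) n iI := .of_hasPullback n iI
  have hO : IsPullback (pullback.fst n iO) (pullback.snd n iO) n iO := .of_hasPullback n iO
  obtain ⟨D, d₂, d₁, eD, hd₂, hd₁, hpush⟩ := (Adhesive.van_kampen H).exists_cube_filling hI hO
  exact ⟨_, _, D, d₂, d₁, _, _, _, eD, _, hd₂.mono_fst_of_mono, hd₁.mono_fst_of_mono,
    inferInstance, hd₂.mono_snd_of_mono, inferInstance, hpush, hI.w, hO.w, hd₂, hd₁⟩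
end

section
/- Let C be an adhesive category with effective unions of monomorphisms. Given a pushout P of a monic span (I ↩ M ↪ O), a monic span (C₂ ↩ D ↪ C₁) with pushout N, and monomorphisms C₂ ↪ I, D ↪ M, C₁ ↪ O such that both resulting squares are pullbacks, the morphism N → P induced by the universal property of the pushout N is a monomorphism. -/
/-!
Since `𝒞` is adhesive, the pushout square `P` of the monic span `I ↩ M ↪ O` is also a pullback
and its legs `I ⟶ P`, `O ⟶ P` are monic. Pasting the pullback square over `C₂` onto it shows that
`D` is the intersection of the two monos `C₂ ↪ P` and `C₁ ↪ P`, so `N` is their union and effective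
unions make `N ⟶ P` monic.
-/

open CategoryTheory

/-- A category has *effective unions* of monomorphisms if, whenever `W` is the
pullback of a cospan of monomorphisms `f : X ↪ Z`, `g : Y ↪ Z` and `U` is a
pushout of the resulting span, the comparison morphism `U ⟶ Z` is again a
monomorphism. -/
def EffectiveUnions (𝒞 : Type*) [Category 𝒞] : Prop :=
  ∀ {W X Y Z U : 𝒞} (f : X ⟶ Z) (g : Y ⟶ Z) (pX : W ⟶ X) (pY : W ⟶ Y),
    Mono f → Mono g → IsPullback pX pY f g →
    ∀ (qX : X ⟶ U) (qY : Y ⟶ U), IsPushout pX pY qX qY →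
    ∀ (u : U ⟶ Z), qX ≫ u = f → qY ≫ u = g → Mono u

namespace CategoryTheory.IsPullback

variable {C : Type*} [Category C]

theorem paste_vert_of_mono {X₁₁ X₁₂ X₂₁ X₂₂ X₃₁ X₃₂ Y : C} {h₁₁ : X₁₁ ⟶ X₁₂} {h₂₁ : X₂₁ ⟶ X₂₂}
    {h₃₁ : X₃₁ ⟶ X₃₂} {v₁₁ : X₁₁ ⟶ X₂₁} {v₁₂ : X₁₂ ⟶ X₂₂} {v₂₁ : X₂₁ ⟶ X₃₁} {v₂₂ : X₂₂ ⟶ X₃₂}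
    {k : X₁₁ ⟶ Y} {m : Y ⟶ X₃₁} [Mono m]
    (s : IsPullback h₁₁ v₁₁ v₁₂ h₂₁) (t : IsPullback h₂₁ v₂₁ v₂₂ h₃₁)
    (hk : k ≫ m = v₁₁ ≫ v₂₁) :
    IsPullback h₁₁ k (v₁₂ ≫ v₂₂) (m ≫ h₃₁) := by
  have restrict : IsPullback (𝟙 X₁₁) k (v₁₁ ≫ v₂₁) m :=
    of_horiz_isIso_mono ⟨by rw [Category.id_comp, hk]⟩
  simpa using restrict.paste_horiz (s.paste_vert t)

end CategoryTheory.IsPullback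

theorem stmt_8_general {𝒞 : Type*} [Category 𝒞] [Adhesive 𝒞]
    (hEff : EffectiveUnions 𝒞) {I M O P C₁ C₂ D N : 𝒞}
    (mI : M ⟶ I) (mO : M ⟶ O) [Mono mI] [Mono mO]
    (iI : I ⟶ P) (iO : O ⟶ P) (HP : IsPushout mI mO iI iO)
    (d₂ : D ⟶ C₂) (d₁ : D ⟶ C₁)
    (c₂ : C₂ ⟶ N) (c₁ : C₁ ⟶ N) (HN : IsPushout d₂ d₁ c₂ c₁)
    (e₂ : C₂ ⟶ I) (eD : D ⟶ M) (e₁ : C₁ ⟶ O)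
    [Mono e₂] [Mono e₁]
    (hpb₂ : IsPullback d₂ eD e₂ mI) (hpb₁ : IsPullback d₁ eD e₁ mO)
    (u : N ⟶ P) (hu₂ : c₂ ≫ u = e₂ ≫ iI) (hu₁ : c₁ ≫ u = e₁ ≫ iO) :
    Mono u := by
  have : Mono iI := Adhesive.mono_of_isPushout_of_mono_right HP
  have : Mono iO := Adhesive.mono_of_isPushout_of_mono_left HP
  have hP : IsPullback mI mO iI iO := Adhesive.isPullback_of_isPushout_of_mono_left HP
  have hD : IsPullback d₂ d₁ (e₂ ≫ iI) (e₁ ≫ iO) := hpb₂.paste_vert_of_mono hP hpb₁.w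
  exact hEff _ _ d₂ d₁ inferInstance inferInstance hD c₂ c₁ HN u hu₂ hu₁

/-- Backward direction of the double-pullback-embedding characterisation.
Let `𝒞` be an adhesive category with effective unions of monomorphisms.
Given a pushout `P` of a monic span `(I ↩ M ↪ O)`, a monic span
`(C₂ ↩ D ↪ C₁)` with pushout `N`, and monomorphisms `C₂ ↪ I`, `D ↪ M`,
`C₁ ↪ O` such that both resulting squares are pullbacks, the morphism
`N ⟶ P` induced by the universal property of the pushout `N` is a
monomorphism. -/
theorem stmt_8 {𝒞 : Type*} [Category 𝒞] [Adhesive 𝒞]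
    (hEff : EffectiveUnions 𝒞) {I M O P C₁ C₂ D N : 𝒞}
    (mI : M ⟶ I) (mO : M ⟶ O) [Mono mI] [Mono mO]
    (iI : I ⟶ P) (iO : O ⟶ P) (HP : IsPushout mI mO iI iO)
    (d₂ : D ⟶ C₂) (d₁ : D ⟶ C₁) [Mono d₂] [Mono d₁]
    (c₂ : C₂ ⟶ N) (c₁ : C₁ ⟶ N) (HN : IsPushout d₂ d₁ c₂ c₁)
    (e₂ : C₂ ⟶ I) (eD : D ⟶ M) (e₁ : C₁ ⟶ O)
    [Mono e₂] [Mono eD] [Mono e₁]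
    (hpb₂ : IsPullback d₂ eD e₂ mI) (hpb₁ : IsPullback d₁ eD e₁ mO)
    (u : N ⟶ P) (hu₂ : c₂ ≫ u = e₂ ≫ iI) (hu₁ : c₁ ≫ u = e₁ ≫ iO) :
    Mono u :=
  stmt_8_general hEff mI mO iI iO HP d₂ d₁ c₂ c₁ HN e₂ eD e₁ hpb₂ hpb₁ u hu₂ hu₁
end

section
/- Let P be the pushout of a monic span of directed multigraphs (I ↩ M ↪ O), and let 𝒩 be a finite set of graphs. Then some N ∈ 𝒩 embeds (via an injective homomorphism) into P if and only if there exist a monic span s = (C₂ ↩ D ↪ C₁) whose pushout is isomorphic to some N ∈ 𝒩, and injective homomorphisms C₂ ↪ I, D ↪ M, C₁ ↪ O such that (C₂ ↩ D ↪ M) is a pullback of (C₂ ↪ I ↩ M) and (C₁ ↩ D ↪ M) is a pullback of (C₁ ↪ O ↩ M). -/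
open CategoryTheory

/-!
A directed multigraph is a parallel pair of functions `E ⇉ V`, so `MultiGraph` is equivalent to
the presheaf category `WalkingParallelPair ⥤ Type` and hence adhesive; the equivalence then holds
in any adhesive category. Given a mono `n : N ↪ P`, pull it back along `I → P ← O`: by the van
Kampen property of the pushout `P` of a monic span, the pulled-back cube has a pushout on top,
which is the required span. Conversely, a pushout of monos is also a pullback, so the two pullback
conditions make `D` the pullback of the monos `C₂ ↪ P ↩ C₁`; in an adhesive category the map to `P`
out of the pushout of such a pullback is mono (Lack–Sobociński, Theorem 5.1,
`Adhesive.desc_mono_of_mono`).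
-/

namespace MultiGraph

open Limits

def toParallelPair : MultiGraph ⥤ (WalkingParallelPair ⥤ Type) where
  obj G := parallelPair (TypeCat.ofHom G.s) (TypeCat.ofHom G.t)
  map f := parallelPairHom _ _ _ _ (TypeCat.ofHom f.onE) (TypeCat.ofHom f.onV)
    (by ext e; exact (f.src e).symm) (by ext e; exact (f.tgt e).symm)
  map_id G := by ext (_ | _) <;> rfl
  map_comp f g := by ext (_ | _) <;> rfl

instance : toParallelPair.Faithful where
  map_injective {G H} f g h := by
    apply MultiGraphHom.ext <;> funext x
    · exact ConcreteCategory.congr_hom (NatTrans.congr_app h .one) x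
    · exact ConcreteCategory.congr_hom (NatTrans.congr_app h .zero) x

instance : toParallelPair.Full where
  map_surjective {G H} η := by
    refine ⟨⟨η.app .one, η.app .zero, fun e => ?_, fun e => ?_⟩, ?_⟩
    · exact (ConcreteCategory.congr_hom (η.naturality .left) e).symm
    · exact (ConcreteCategory.congr_hom (η.naturality .right) e).symm
    · ext (_ | _) <;> rfl

instance : toParallelPair.EssSurj where
  mem_essImage K := ⟨⟨K.obj .one, K.obj .zero, K.map .left, K.map .right⟩,
    ⟨(diagramIsoParallelPair K).symm⟩⟩

instance : toParallelPair.IsEquivalence where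

instance : Adhesive MultiGraph :=
  have : HasPullbacks MultiGraph := Adjunction.hasLimitsOfShape_of_equivalence toParallelPair
  have : HasPushouts MultiGraph := Adjunction.hasColimitsOfShape_of_equivalence toParallelPair
  adhesive_of_preserves_and_reflects_isomorphism toParallelPair

end MultiGraph

namespace CategoryTheory

open Limits

variable {C : Type*} [Category C]

theorem IsPullback.of_snd_comp_mono {X Y Z W S : C} {a : X ⟶ Y} {b : X ⟶ Z} {m : Z ⟶ W}
    {f : Y ⟶ S} {g : W ⟶ S} [Mono m] (h : IsPullback a (b ≫ m) f g) :
    IsPullback a b f (m ≫ g) := by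
  have w : a ≫ f = b ≫ m ≫ g := by simpa using h.w
  refine IsPullback.of_isLimit' ⟨w⟩ (PullbackCone.IsLimit.mk w
    (fun s => h.lift s.fst (s.snd ≫ m) (by simpa using s.condition)) (fun s => h.lift_fst ..)
    (fun s => ?_) (fun s l hl₁ hl₂ => h.hom_ext ?_ ?_))
  · rw [← cancel_mono m, Category.assoc, h.lift_snd]
  · simp [hl₁]
  · simp [← hl₂]

namespace Adhesive

theorem mono_desc_of_isPullback [Adhesive C] {D A B N Z : C} {d₁ : D ⟶ A} {d₂ : D ⟶ B}
    {c₁ : A ⟶ N} {c₂ : B ⟶ N} {a : A ⟶ Z} {b : B ⟶ Z} [Mono a] [Mono b]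
    (hD : IsPullback d₁ d₂ a b) (hN : IsPushout d₁ d₂ c₁ c₂) : Mono (hN.desc a b hD.w) := by
  have hN' : IsPushout (pullback.fst a b) (pullback.snd a b) c₁ c₂ :=
    hN.of_iso hD.isoPullback (Iso.refl _) (Iso.refl _) (Iso.refl _) (by simp) (by simp)
      (by simp) (by simp)
  have : hN.desc a b hD.w = hN'.isoPushout.hom ≫ pushout.desc a b pullback.condition :=
    hN.hom_ext (by simp [pushout.inl_desc]) (by simp [pushout.inr_desc])
  rw [this]
  infer_instance

variable [Adhesive C] {M I O P : C} {mI : M ⟶ I} {mO : M ⟶ O} [Mono mI] [Mono mO]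
  {iI : I ⟶ P} {iO : O ⟶ P}

theorem exists_isPushout_isPullback_of_mono (H : IsPushout mI mO iI iO) {N : C} (n : N ⟶ P)
    [Mono n] :
    ∃ (C₁ C₂ D : C) (d₂ : D ⟶ C₂) (d₁ : D ⟶ C₁) (c₂ : C₂ ⟶ N) (c₁ : C₁ ⟶ N)
      (e₂ : C₂ ⟶ I) (eD : D ⟶ M) (e₁ : C₁ ⟶ O),
      Mono d₂ ∧ Mono d₁ ∧ IsPushout d₂ d₁ c₂ c₁ ∧ Mono e₂ ∧ Mono eD ∧ Mono e₁ ∧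
        IsPullback d₂ eD e₂ mI ∧ IsPullback d₁ eD e₁ mO := by
  obtain ⟨D, d₂, d₁, eD, h₂, h₁, hN⟩ := (Adhesive.van_kampen H).exists_cube_filling
    (IsPullback.of_hasPullback n iI) (IsPullback.of_hasPullback n iO)
  exact ⟨_, _, D, d₂, d₁, _, _, _, eD, _, h₂.mono_fst_of_mono, h₁.mono_fst_of_mono, hN,
    inferInstance, h₂.mono_snd_of_mono, inferInstance, h₂, h₁⟩

theorem exists_mono_of_isPushout_isPullback (H : IsPushout mI mO iI iO)
    {C₁ C₂ D N : C} {d₂ : D ⟶ C₂} {d₁ : D ⟶ C₁} {c₂ : C₂ ⟶ N} {c₁ : C₁ ⟶ N}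
    {e₂ : C₂ ⟶ I} {eD : D ⟶ M} {e₁ : C₁ ⟶ O} [Mono e₂] [Mono e₁]
    (hN : IsPushout d₂ d₁ c₂ c₁) (h₂ : IsPullback d₂ eD e₂ mI) (h₁ : IsPullback d₁ eD e₁ mO) :
    ∃ n : N ⟶ P, Mono n := by
  have : Mono iI := mono_of_isPushout_of_mono_right H
  have : Mono iO := mono_of_isPushout_of_mono_left H
  have hD : IsPullback d₂ d₁ (e₂ ≫ iI) (e₁ ≫ iO) := by
    have hC₁ := h₁.paste_vert (isPullback_of_isPushout_of_mono_left H).flip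
    rw [← h₂.w] at hC₁
    exact hC₁.of_snd_comp_mono.flip
  exact ⟨_, mono_desc_of_isPullback hD hN⟩

end Adhesive

end CategoryTheory

theorem stmt_9_general {I M O P : MultiGraph}
    (mI : M ⟶ I) (mO : M ⟶ O) [Mono mI] [Mono mO]
    (iI : I ⟶ P) (iO : O ⟶ P) (H : IsPushout mI mO iI iO)
    (𝒩 : Set MultiGraph) :
    (∃ N ∈ 𝒩, ∃ n : N ⟶ P, Mono n) ↔
      ∃ (C₁ C₂ D : MultiGraph) (d₂ : D ⟶ C₂) (d₁ : D ⟶ C₁),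
        Mono d₂ ∧ Mono d₁ ∧
        (∃ N ∈ 𝒩, ∃ (c₂ : C₂ ⟶ N) (c₁ : C₁ ⟶ N), IsPushout d₂ d₁ c₂ c₁) ∧
        ∃ (e₂ : C₂ ⟶ I) (eD : D ⟶ M) (e₁ : C₁ ⟶ O),
          Mono e₂ ∧ Mono eD ∧ Mono e₁ ∧
          IsPullback d₂ eD e₂ mI ∧ IsPullback d₁ eD e₁ mO := by
  constructor
  · rintro ⟨N, hN, n, hn⟩
    obtain ⟨C₁, C₂, D, d₂, d₁, c₂, c₁, e₂, eD, e₁, hd₂, hd₁, hpush, he₂, heD, he₁, h₂, h₁⟩ :=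
      Adhesive.exists_isPushout_isPullback_of_mono H n
    exact ⟨C₁, C₂, D, d₂, d₁, hd₂, hd₁, ⟨N, hN, c₂, c₁, hpush⟩, e₂, eD, e₁, he₂, heD, he₁, h₂, h₁⟩
  · rintro ⟨_, _, _, _, _, -, -, ⟨N, hN, _, _, hpush⟩, _, _, _, he₂, -, he₁, h₂, h₁⟩
    exact ⟨N, hN, Adhesive.exists_mono_of_isPushout_isPullback H hpush h₂ h₁⟩

/-- Double-pullback-embedding equivalence, in the category of directed
multigraphs.  Let `P` be the pushout of a monic span `(I ↩ M ↪ O)` and let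
`𝒩` be a finite set of graphs.  Then some `N ∈ 𝒩` embeds into `P` via a
monomorphism iff there exist a monic span `(C₂ ↩ D ↪ C₁)` whose pushout is
(isomorphic to) some `N ∈ 𝒩` and monomorphisms `C₂ ↪ I`, `D ↪ M`, `C₁ ↪ O`
making both resulting squares pullbacks. -/
theorem stmt_9 {I M O P : MultiGraph}
    (mI : M ⟶ I) (mO : M ⟶ O) [Mono mI] [Mono mO]
    (iI : I ⟶ P) (iO : O ⟶ P) (H : IsPushout mI mO iI iO)
    (𝒩 : Set MultiGraph) (h𝒩 : 𝒩.Finite) :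
    (∃ N ∈ 𝒩, ∃ n : N ⟶ P, Mono n) ↔
      ∃ (C₁ C₂ D : MultiGraph) (d₂ : D ⟶ C₂) (d₁ : D ⟶ C₁),
        Mono d₂ ∧ Mono d₁ ∧
        (∃ N ∈ 𝒩, ∃ (c₂ : C₂ ⟶ N) (c₁ : C₁ ⟶ N), IsPushout d₂ d₁ c₂ c₁) ∧
        ∃ (e₂ : C₂ ⟶ I) (eD : D ⟶ M) (e₁ : C₁ ⟶ O),
          Mono e₂ ∧ Mono eD ∧ Mono e₁ ∧
          IsPullback d₂ eD e₂ mI ∧ IsPullback d₁ eD e₁ mO :=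
  stmt_9_general mI mO iI iO H 𝒩
end

section
/- In the category of directed multigraphs, given a vertex-deletion rule (∅ ↩ ∅ ↪ •) and a match sending the single input vertex to a vertex v of a finite graph X, the final pullback complement of (∅ ↪ •, • ↪ X) exists and is the graph obtained from X by deleting v and all edges incident to v. -/
open CategoryTheory

/-- Final pullback complement: given `f : A ⟶ B` and `g : B ⟶ X`, a pair
`(h : A ⟶ D, k : D ⟶ X)` is an FPC of `(f, g)` if the square is a pullback
and it is universal among pullback squares over `g` whose top morphism
factors through `f`. -/
def IsFPC {C : Type*} [Category C] {A B D X : C}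
    (f : A ⟶ B) (g : B ⟶ X) (h : A ⟶ D) (k : D ⟶ X) : Prop :=
  IsPullback f h g k ∧
  ∀ {A' D' : C} (f' : A' ⟶ B) (h' : A' ⟶ D') (k' : D' ⟶ X),
    IsPullback f' h' g k' → ∀ α : A' ⟶ A, α ≫ f = f' →
      ∃! δ : D' ⟶ D, δ ≫ k = k' ∧ h' ≫ δ = α ≫ h

/-- The empty graph. -/
def mgEmpty : MultiGraph := ⟨PEmpty, PEmpty, PEmpty.elim, PEmpty.elim⟩

/-- The graph with a single vertex and no edges. -/
def vertexGraph : MultiGraph := ⟨PUnit, PEmpty, PEmpty.elim, PEmpty.elim⟩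

/-- The graph obtained from `X` by deleting the vertex `v` together with all
edges incident to `v`. -/
def deleteVertex (X : MultiGraph) (v : X.V) : MultiGraph :=
  ⟨{w : X.V // w ≠ v}, {e : X.E // X.s e ≠ v ∧ X.t e ≠ v},
    fun e => ⟨X.s e.1, e.2.1⟩, fun e => ⟨X.t e.1, e.2.2⟩⟩

/-- The unique morphism from the empty graph. -/
def emptyTo (G : MultiGraph) : mgEmpty ⟶ G :=
  ⟨PEmpty.elim, PEmpty.elim, fun e => e.elim, fun e => e.elim⟩

/-- The match sending the single vertex to `v : X.V`. -/
def matchAt (X : MultiGraph) (v : X.V) : vertexGraph ⟶ X :=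
  ⟨fun _ => v, PEmpty.elim, fun e => e.elim, fun e => e.elim⟩

/-- The inclusion of the vertex-deleted graph. -/
def deleteVertexIncl (X : MultiGraph) (v : X.V) : deleteVertex X v ⟶ X :=
  ⟨Subtype.val, Subtype.val, fun _ => rfl, fun _ => rfl⟩

/-!
The pullback of `• ↦ v` along `k : D ⟶ X` is the fibre of `k` over `v`, so a square over
`∅ ⟶ •` is a pullback exactly when `k` misses `v`. The maps missing `v` are precisely those
factoring through the inclusion `X ∖ v ↪ X`, and they do so uniquely since it is mono.
-/

open Limits

namespace MultiGraph

instance isEmpty_E_of_isEmpty_V (G : MultiGraph) [IsEmpty G.V] : IsEmpty G.E :=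
  ⟨fun e => isEmptyElim (G.s e)⟩

instance : IsEmpty mgEmpty.V := inferInstanceAs (IsEmpty PEmpty)

instance : IsEmpty vertexGraph.E := inferInstanceAs (IsEmpty PEmpty)

def homOfIsEmpty (G H : MultiGraph) [IsEmpty G.V] : G ⟶ H :=
  ⟨isEmptyElim, isEmptyElim, fun e => isEmptyElim e, fun e => isEmptyElim e⟩

lemma hom_ext_of_isEmpty {G H : MultiGraph} [IsEmpty G.V] (f g : G ⟶ H) : f = g :=
  MultiGraphHom.ext (funext isEmptyElim) (funext isEmptyElim)

variable {D X : MultiGraph} {v : X.V}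

lemma isEmpty_V_of_comp_matchAt_eq {W : MultiGraph} {k : D ⟶ X} (hk : ∀ w, k.onV w ≠ v)
    {a : W ⟶ vertexGraph} {b : W ⟶ D} (h : a ≫ matchAt X v = b ≫ k) : IsEmpty W.V :=
  ⟨fun w => hk (b.onV w) (congrArg (·.onV w) h).symm⟩

lemma isPullback_matchAt_of_forall_ne {k : D ⟶ X} (hk : ∀ w, k.onV w ≠ v) :
    IsPullback (emptyTo vertexGraph) (emptyTo D) (matchAt X v) k := by
  have (s : PullbackCone (matchAt X v) k) : IsEmpty s.pt.V :=
    isEmpty_V_of_comp_matchAt_eq hk s.condition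
  exact IsPullback.of_isLimit' ⟨hom_ext_of_isEmpty _ _⟩ <|
    PullbackCone.IsLimit.mk _ (fun _ => homOfIsEmpty _ _) (fun _ => hom_ext_of_isEmpty _ _)
      (fun _ => hom_ext_of_isEmpty _ _) (fun _ _ _ _ => hom_ext_of_isEmpty _ _)

lemma onV_ne_of_isPullback {A D : MultiGraph} {f : A ⟶ vertexGraph} {h : A ⟶ D} {k : D ⟶ X}
    [IsEmpty A.V] (hpb : IsPullback f h (matchAt X v) k) (w : D.V) : k.onV w ≠ v := by
  intro hw
  have hcomm : 𝟙 vertexGraph ≫ matchAt X v = matchAt D w ≫ k :=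
    MultiGraphHom.ext (funext fun _ => hw.symm) (funext isEmptyElim)
  exact isEmptyElim ((hpb.lift _ _ hcomm).onV PUnit.unit)

def deleteVertexLift (k : D ⟶ X) (hk : ∀ w, k.onV w ≠ v) : D ⟶ deleteVertex X v :=
  ⟨fun w => ⟨k.onV w, hk w⟩,
    fun e => ⟨k.onE e, k.src e ▸ hk _, k.tgt e ▸ hk _⟩,
    fun e => Subtype.ext (k.src e), fun e => Subtype.ext (k.tgt e)⟩

@[simp]
lemma deleteVertexLift_comp_incl (k : D ⟶ X) (hk : ∀ w, k.onV w ≠ v) :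
    deleteVertexLift k hk ≫ deleteVertexIncl X v = k :=
  rfl

instance (X : MultiGraph) (v : X.V) : Mono (deleteVertexIncl X v) :=
  ⟨fun _ _ h => MultiGraphHom.ext
    (funext fun w => Subtype.ext (congrArg (·.onV w) h))
    (funext fun e => Subtype.ext (congrArg (·.onE e) h))⟩

end MultiGraph

open MultiGraph in
theorem stmt_14_general (X : MultiGraph) (v : X.V) :
    IsFPC (emptyTo vertexGraph) (matchAt X v)
      (emptyTo (deleteVertex X v)) (deleteVertexIncl X v) := by
  refine ⟨isPullback_matchAt_of_forall_ne fun w => w.2, ?_⟩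
  intro A' D' f' h' k' hpb α _
  have := Function.isEmpty α.onV
  have hk' := onV_ne_of_isPullback hpb
  exact ⟨deleteVertexLift k' hk', ⟨deleteVertexLift_comp_incl k' hk', hom_ext_of_isEmpty _ _⟩,
    fun δ hδ => (cancel_mono (deleteVertexIncl X v)).1 hδ.1⟩

/-- In the category of directed multigraphs, for the vertex-deletion rule and
a match sending the single input vertex to a vertex `v` of a finite graph
`X`, the final pullback complement of `(∅ ↪ •, • ↪ X)` exists and is the
graph obtained from `X` by deleting `v` and all edges incident to `v`. -/
theorem stmt_14 (X : MultiGraph) [Finite X.V] [Finite X.E] (v : X.V) :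
    IsFPC (emptyTo vertexGraph) (matchAt X v)
      (emptyTo (deleteVertex X v)) (deleteVertexIncl X v) :=
  stmt_14_general X v
end

section
/- In an adhesive category, the van Kampen property implies uniqueness of pushout complements along monomorphisms: if m : A ↪ B is a monomorphism and g : B → D, then any two pushout complements of (m, g) — i.e., objects C with morphisms A → C → D making a pushout square with m and g — are isomorphic compatibly with the given morphisms. -/
/-!
Let `C₁ ←a₁ A →a₂ C₂` be two pushout complements of `(m, g)` and let `U = C₁ ×_D C₂`, with
`u : A ⟶ U` induced by `a₁, a₂`. Since `m` is mono, both complement squares are pullbacks, and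
pasting shows that `A` is the pullback of `U → C₁` along `a₁`. This gives a cube over the
van Kampen square for `C₂` whose top face has `𝟙 A` as one side and whose vertical faces are all
pullbacks, so the top face is a pushout; a pushout along `𝟙 A` forces `U → C₁` to be an
isomorphism. By symmetry `U → C₂` is one too.
-/

open CategoryTheory Limits

section PushoutComplement

variable {C : Type*} [Category C] {A B D C₁ C₂ U : C} {m : A ⟶ B} {g : B ⟶ D}
  {a₁ : A ⟶ C₁} {c₁ : C₁ ⟶ D} {a₂ : A ⟶ C₂} {c₂ : C₂ ⟶ D}
  {p₁ : U ⟶ C₁} {p₂ : U ⟶ C₂} {u : A ⟶ U}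

lemma isPullback_lift_id_of_mono [Mono m] (hU : IsPullback p₁ p₂ c₁ c₂)
    (h₂ : IsPullback m a₂ g c₂) (hw : m ≫ g = a₁ ≫ c₁) (hu₁ : u ≫ p₁ = a₁)
    (hu₂ : u ≫ p₂ = a₂) : IsPullback u (𝟙 A) p₁ a₁ := by
  have outer : IsPullback (u ≫ p₂) (𝟙 A) c₂ (a₁ ≫ c₁) := by
    simpa [hw, hu₂] using ((IsKernelPair.id_of_mono m).paste_vert h₂).flip
  exact outer.of_right (by simp [hu₁]) hU.flip

lemma isIso_fst_of_isPushout_of_isPushout [Adhesive C] [Mono m]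
    (H₁ : IsPushout m a₁ g c₁) (H₂ : IsPushout m a₂ g c₂) (hU : IsPullback p₁ p₂ c₁ c₂)
    (hu₁ : u ≫ p₁ = a₁) (hu₂ : u ≫ p₂ = a₂) : IsIso p₁ := by
  have back : IsPullback u (𝟙 A) p₂ a₂ :=
    isPullback_lift_id_of_mono hU.flip (Adhesive.isPullback_of_isPushout_of_mono_left H₁)
      H₂.w hu₂ hu₁
  have top : IsPushout (𝟙 A) u a₁ p₁ :=
    (Adhesive.van_kampen H₂ (𝟙 A) u a₁ p₁ (𝟙 A) m p₂ c₁ (IsKernelPair.id_of_mono m) back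
      ⟨H₁.w.symm⟩ ⟨hU.w⟩ ⟨by simp [hu₁]⟩).mpr
      ⟨(Adhesive.isPullback_of_isPushout_of_mono_left H₁).flip, hU⟩
  exact top.isIso_inr_of_isIso

end PushoutComplement

/-- In an adhesive category, pushout complements along monomorphisms are
unique: if `m : A ⟶ B` is a monomorphism and `g : B ⟶ D`, then any two pushout
complements of `(m, g)` are isomorphic compatibly with the given morphisms. -/
theorem stmt_18 {C : Type*} [Category C] [Adhesive C] {A B D : C}
    (m : A ⟶ B) [Mono m] (g : B ⟶ D) {C₁ C₂ : C}
    (a₁ : A ⟶ C₁) (c₁ : C₁ ⟶ D) (a₂ : A ⟶ C₂) (c₂ : C₂ ⟶ D)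
    (H₁ : IsPushout m a₁ g c₁) (H₂ : IsPushout m a₂ g c₂) :
    ∃ φ : C₁ ≅ C₂, a₁ ≫ φ.hom = a₂ ∧ φ.hom ≫ c₂ = c₁ := by
  -- makes `pullback c₁ c₂` available
  have : Mono c₁ := Adhesive.mono_of_isPushout_of_mono_left H₁
  have hU := IsPullback.of_hasPullback c₁ c₂
  have hw : a₁ ≫ c₁ = a₂ ≫ c₂ := H₁.w.symm.trans H₂.w
  have hu₁ := pullback.lift_fst a₁ a₂ hw
  have hu₂ := pullback.lift_snd a₁ a₂ hw
  have := isIso_fst_of_isPushout_of_isPushout H₁ H₂ hU hu₁ hu₂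
  have := isIso_fst_of_isPushout_of_isPushout H₂ H₁ hU.flip hu₂ hu₁
  refine ⟨(asIso (pullback.fst c₁ c₂)).symm ≪≫ asIso (pullback.snd c₁ c₂), ?_, ?_⟩
  · rw [← hu₁]
    simp [hu₂]
  · simp [pullback.condition]
end
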